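/- Fix integers K ≥ 2, reals σ > 0, c > 0, δ ∈ (0,1) with K/δ > 1, and means μ_1 > μ_2 ≥ … ≥ μ_K with gap Δ = μ_1 − μ_2. Let t_W and n be positive integers with t_W ≥ (2σ/Δ)·√(Kc·ln(K/δ)) and n ≥ t_W/(Kc). Fix j ≠ 1 and let X_{1,t}, X_{j,t} (t ∈ {t_W+1,…,t_W+n}) be mutually independent real random variables with X_{1,t} ~ N(μ_1, σ²/t) and X_{j,t} ~ N(μ_j, σ²/t). Define μ̂'_k = (1/n)·Σ_{t=t_W+1}^{t_W+n} X_{k,t} for k ∈ {1, j}. Then P(μ̂'_j ≥ μ̂'_1) ≤ δ/K. -/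

import Mathlib

/-!
A centred Gaussian is sub-Gaussian with variance proxy its variance. Flipping the sign of the
centred samples of the best arm, the `2n` samples become independent sub-Gaussian variables whose
sum exceeds `n (μ₁ - μ_j) ≥ n Δ` exactly on the error event, with total proxy at most
`2 n σ² / t_W`. Hoeffding's bound then gives the error probability `exp (-n Δ² t_W / (4 σ²))`,
and the two conditions on `t_W` and `n` make this at most `δ / K`.
-/

open MeasureTheory ProbabilityTheory Real
open scoped NNReal

lemma hasSubgaussianMGF_id_gaussianReal_zero (v : ℝ≥0) :
    HasSubgaussianMGF id v (gaussianReal 0 v) where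
  integrable_exp_mul t := integrable_exp_mul_gaussianReal t
  mgf_le t := by simp [mgf_id_gaussianReal]

section

variable {Ω : Type*} [MeasurableSpace Ω] {P : Measure Ω}

lemma hasSubgaussianMGF_sub_of_map_eq_gaussianReal {X : Ω → ℝ} {m : ℝ} {v : ℝ≥0}
    (hX : P.map X = gaussianReal m v) : HasSubgaussianMGF (fun ω ↦ X ω - m) v P := by
  have hXm : AEMeasurable X P := aemeasurable_of_map_neZero (by rw [hX]; infer_instance)
  rw [← HasSubgaussianMGF.id_map_iff (by fun_prop)]
  have hmap : P.map (fun ω ↦ X ω - m) = gaussianReal 0 v := by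
    rw [show (fun ω ↦ X ω - m) = (· - m) ∘ X from rfl,
      ← AEMeasurable.map_map_of_aemeasurable (by fun_prop) hXm, hX,
      gaussianReal_map_sub_const, sub_self]
  rw [hmap]
  exact hasSubgaussianMGF_id_gaussianReal_zero v

lemma measureReal_sum_le_sum_le_exp {ι : Type*} [Fintype ι] {X : Fin 2 → ι → Ω → ℝ}
    (hindep : iIndepFun (fun p : Fin 2 × ι ↦ X p.1 p.2) P) {m : Fin 2 → ℝ} {v : ι → ℝ≥0}
    (hX : ∀ k i, HasSubgaussianMGF (fun ω ↦ X k i ω - m k) (v i) P) (hm : m 1 ≤ m 0) :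
    P.real {ω | ∑ i, X 0 i ω ≤ ∑ i, X 1 i ω}
      ≤ exp (-(Fintype.card ι * (m 0 - m 1)) ^ 2 / (4 * ∑ i, (v i : ℝ))) := by
  set center : Fin 2 × ι → ℝ → ℝ := fun p x ↦ if p.1 = 0 then m p.1 - x else x - m p.1
  have hZ : ∀ p ∈ Finset.univ, HasSubgaussianMGF (center p ∘ X p.1 p.2) (v p.2) P := by
    rintro ⟨k, i⟩ -
    fin_cases k
    · exact (hX 0 i).neg.congr (ae_of_all _ fun ω ↦ by simp [center])
    · simpa [center, Function.comp_def] using hX 1 i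
  have hsum : ∀ ω, ∑ p, (center p ∘ X p.1 p.2) ω
      = ∑ i, X 1 i ω - ∑ i, X 0 i ω + Fintype.card ι * (m 0 - m 1) := by
    intro ω
    simp only [center, Function.comp_apply, Fintype.sum_prod_type, Fin.sum_univ_two, ↓reduceIte,
      one_ne_zero, Finset.sum_sub_distrib, Finset.sum_const, Finset.card_univ, nsmul_eq_mul]
    ring
  have hvsum : ∑ p : Fin 2 × ι, (v p.2 : ℝ) = 2 * ∑ i, (v i : ℝ) := by
    simp [Fintype.sum_prod_type]
  calc P.real {ω | ∑ i, X 0 i ω ≤ ∑ i, X 1 i ω}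
      = P.real {ω | Fintype.card ι * (m 0 - m 1) ≤ ∑ p, (center p ∘ X p.1 p.2) ω} := by
        congr 1
        ext ω
        simp only [Set.mem_ofPred, hsum]
        constructor <;> intro h <;> linarith
    _ ≤ _ := HasSubgaussianMGF.measure_sum_ge_le_of_iIndepFun
        (hindep.comp center fun p ↦ by dsimp [center]; split_ifs <;> fun_prop) hZ
        (by have := sub_nonneg.2 hm; positivity)
    _ = _ := by rw [NNReal.coe_sum, hvsum]; ring_nf
end

lemma le_mul_sq_mul_div_of_mul_sqrt_le {σ Δ A L t n : ℝ} (hσ : 0 < σ) (hΔ : 0 < Δ) (hA : 0 < A)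
    (hL : 0 ≤ L) (ht : 2 * σ / Δ * √(A * L) ≤ t) (hn : t / A ≤ n) :
    L ≤ n * Δ ^ 2 * t / (4 * σ ^ 2) := by
  have ht0 : 0 ≤ t := le_trans (by positivity) ht
  have hsq : 4 * σ ^ 2 * (A * L) ≤ Δ ^ 2 * t ^ 2 := by
    have := pow_le_pow_left₀ (by positivity) ht 2
    rw [mul_pow, sq_sqrt (by positivity), div_pow] at this
    rw [div_mul_eq_mul_div, div_le_iff₀ (by positivity)] at this
    linarith
  have htn : t ≤ n * A := (div_le_iff₀ hA).1 hn
  rw [le_div_iff₀ (by positivity)]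
  refine le_of_mul_le_mul_left ?_ hA
  nlinarith [mul_le_mul_of_nonneg_left htn (by positivity : 0 ≤ Δ ^ 2 * t)]

lemma sum_toNNReal_div_le (a : ℝ) {t : ℕ} (ht : 0 < t) (n : ℕ) :
    ∑ i : Fin n, ((a ^ 2 / ((t : ℝ) + 1 + (i : ℕ))).toNNReal : ℝ) ≤ n * (a ^ 2 / t) := by
  have hterm : ∀ i : Fin n, ((a ^ 2 / ((t : ℝ) + 1 + (i : ℕ))).toNNReal : ℝ) ≤ a ^ 2 / t := by
    intro i
    rw [Real.coe_toNNReal _ (by positivity)]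
    gcongr
    linarith [(Nat.cast_nonneg i : (0 : ℝ) ≤ (i : ℕ))]
  simpa using Finset.sum_le_sum fun i (_ : i ∈ Finset.univ) ↦ hterm i

/-- Fix `K ≥ 2`, `σ, c > 0`, `δ ∈ (0,1)` with `K/δ > 1`, ordered means
`μ 0 > μ 1 ≥ … ≥ μ (K-1)` with gap `Δ = μ 0 - μ 1`, and integers `tW, n` with
`tW ≥ (2σ/Δ)√(Kc ln(K/δ))` and `n ≥ tW/(Kc)`.  Fix a suboptimal arm `j ≠ 0` and let
`X 0 i ~ N(μ 0, σ²/t)` and `X 1 i ~ N(μ j, σ²/t)` (with `t = tW + 1 + i`) be mutually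
independent.  Then the probability that the empirical mean of arm `j` over rounds
`tW+1, …, tW+n` is at least that of arm `1` is at most `δ/K`. -/
theorem wtcs_single_arm_error_bound
    {Ω : Type*} [MeasurableSpace Ω] (P : Measure Ω) [IsProbabilityMeasure P]
    (K : ℕ) (hK : 2 ≤ K) (σ c δ : ℝ) (hσ : 0 < σ) (hc : 0 < c)
    (hKδ : 1 < (K : ℝ) / δ)
    (μ : Fin K → ℝ)
    (hμtop : μ ⟨1, by omega⟩ < μ ⟨0, by omega⟩)
    (hμmono : ∀ i j : Fin K, i ≤ j → μ j ≤ μ i)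
    (Δ : ℝ) (hΔ : Δ = μ ⟨0, by omega⟩ - μ ⟨1, by omega⟩)
    (tW n : ℕ) (htW0 : 0 < tW) (hn0 : 0 < n)
    (htW : (2 * σ / Δ) * Real.sqrt ((K : ℝ) * c * Real.log ((K : ℝ) / δ)) ≤ (tW : ℝ))
    (hn : (tW : ℝ) / ((K : ℝ) * c) ≤ (n : ℝ))
    (j : Fin K) (hj : j ≠ ⟨0, by omega⟩)
    (X : Fin 2 → Fin n → Ω → ℝ)
    (hXdist1 : ∀ i : Fin n, P.map (X 0 i) =
      gaussianReal (μ ⟨0, by omega⟩) (Real.toNNReal (σ ^ 2 / ((tW : ℝ) + 1 + (i : ℕ)))))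
    (hXdistj : ∀ i : Fin n, P.map (X 1 i) =
      gaussianReal (μ j) (Real.toNNReal (σ ^ 2 / ((tW : ℝ) + 1 + (i : ℕ)))))
    (hXindep : iIndepFun
      (fun p : Fin 2 × Fin n => X p.1 p.2) P)
    (muhat : Fin 2 → Ω → ℝ)
    (hmuhat : ∀ k ω, muhat k ω = (1 / (n : ℝ)) * ∑ i : Fin n, X k i ω) :
    P {ω | muhat 0 ω ≤ muhat 1 ω} ≤ ENNReal.ofReal (δ / (K : ℝ)) := by
  set v : Fin n → ℝ≥0 := fun i ↦ (σ ^ 2 / ((tW : ℝ) + 1 + (i : ℕ))).toNNReal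
  set m : Fin 2 → ℝ := ![μ ⟨0, by omega⟩, μ j]
  have hΔ0 : 0 < Δ := by linarith
  have hgap : Δ ≤ m 0 - m 1 :=
    hΔ ▸ sub_le_sub_left (hμmono _ j (Fin.mk_le_of_le_val (by grind [Fin.ext_iff]))) _
  have hsubG : ∀ k i, HasSubgaussianMGF (fun ω ↦ X k i ω - m k) (v i) P := fun k i ↦ by
    fin_cases k
    exacts [hasSubgaussianMGF_sub_of_map_eq_gaussianReal (hXdist1 i),
      hasSubgaussianMGF_sub_of_map_eq_gaussianReal (hXdistj i)]
  have hv : 0 < ∑ i, (v i : ℝ) :=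
    Finset.sum_pos (fun i _ ↦ by simp only [v, Real.coe_toNNReal']; positivity)
      (Finset.univ_nonempty_iff.2 ⟨⟨0, hn0⟩⟩)
  have hexponent : log (K / δ) ≤ (n * (m 0 - m 1)) ^ 2 / (4 * ∑ i, (v i : ℝ)) := calc
    log (K / δ) ≤ n * Δ ^ 2 * tW / (4 * σ ^ 2) :=
      le_mul_sq_mul_div_of_mul_sqrt_le hσ hΔ0 (by positivity) (log_pos hKδ).le htW hn
    _ = (n * Δ) ^ 2 / (4 * (n * (σ ^ 2 / tW))) := by field_simp
    _ ≤ (n * (m 0 - m 1)) ^ 2 / (4 * ∑ i, (v i : ℝ)) := by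
      gcongr
      exact sum_toNNReal_div_le σ htW0 n
  have hevent : {ω | muhat 0 ω ≤ muhat 1 ω} = {ω | ∑ i, X 0 i ω ≤ ∑ i, X 1 i ω} := by
    ext ω
    simp only [Set.mem_ofPred, hmuhat]
    exact mul_le_mul_iff_of_pos_left (by positivity)
  rw [hevent, ← ofReal_measureReal]
  refine ENNReal.ofReal_le_ofReal
    ((measureReal_sum_le_sum_le_exp hXindep hsubG (by linarith)).trans ?_)
  calc exp (-(Fintype.card (Fin n) * (m 0 - m 1)) ^ 2 / (4 * ∑ i, (v i : ℝ)))
      ≤ exp (-log (K / δ)) := by rw [Fintype.card_fin, neg_div]; gcongr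
    _ = δ / K := by rw [exp_neg, exp_log (one_pos.trans hKδ), inv_div]
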